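/- If x_1, ..., x_i are pairwise commuting elements of a group G, then the bar-complex chain ⟨x_1,...,x_i⟩ := [x_1] ∧ [x_2] ∧ ... ∧ [x_i] (iterated shuffle product) is a cycle, and the homology class it represents in H_i(G;k) is i-linear and skew-symmetric in x_1,...,x_i. -/

import Mathlib

open scoped Classical

open Finsupp

/-- Chains of the (normalized) bar complex of `G` over `k`: the free `k`-module
on lists of elements of `G`. -/
abbrev BarChain (G : Type*) [Group G] (k : Type*) [CommRing k] := List G →₀ k

variable {G : Type*} [Group G] {k : Type*} [CommRing k]

/-- The normalized bar symbol `[x₁|...|x_s]`: zero if some entry equals `1`. -/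
noncomputable def barSym (l : List G) : BarChain G k :=
  if (1 : G) ∈ l then 0 else Finsupp.single l 1

/-- Normalization map, killing all basis lists containing `1`. -/
noncomputable def barNorm : BarChain G k →ₗ[k] BarChain G k :=
  Finsupp.lsum k fun l => LinearMap.toSpanSingleton k _ (barSym l)

/-- Merge the `j`-th and `(j+1)`-st entries of a list by multiplying them. -/
def mergeAt (l : List G) (j : ℕ) : List G :=
  l.take j ++ [l.getD j 1 * l.getD (j+1) 1] ++ l.drop (j+2)

/-- The boundary of a bar symbol (normalized convention: symbols with an entry
equal to `1` are zero). -/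
noncomputable def barDList (l : List G) : BarChain G k :=
  if l = [] then 0 else
    barSym l.tail
      + ∑ j ∈ Finset.range (l.length - 1), ((-1 : k)^(j+1)) • barSym (mergeAt l j)
      + ((-1 : k)^l.length) • barSym l.dropLast

/-- The boundary operator of the normalized bar complex. -/
noncomputable def barD : BarChain G k →ₗ[k] BarChain G k :=
  Finsupp.lsum k fun l => LinearMap.toSpanSingleton k _ (barDList l)

/-- The (signed) shuffle of two lists. -/
noncomputable def shuffleList : List G → List G → BarChain G k
  | [], l => Finsupp.single l 1
  | l, [] => Finsupp.single l 1
  | x :: xs, y :: ys =>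
      Finsupp.mapDomain (x :: ·) (shuffleList xs (y :: ys))
        + ((-1 : k)^(xs.length + 1)) • Finsupp.mapDomain (y :: ·) (shuffleList (x :: xs) ys)
  termination_by l1 l2 => l1.length + l2.length

/-- The bilinear shuffle product on bar chains. -/
noncomputable def barSh : BarChain G k →ₗ[k] BarChain G k →ₗ[k] BarChain G k :=
  Finsupp.lsum k fun l1 => LinearMap.toSpanSingleton k _
    ((Finsupp.lsum k fun l2 => LinearMap.toSpanSingleton k _ (shuffleList l1 l2) :
      BarChain G k →ₗ[k] BarChain G k))

/-- The shuffle product in the normalized bar complex. -/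
noncomputable def barNSh (a b : BarChain G k) : BarChain G k :=
  barNorm (barSh a b)

/-- The chain `[ζ]^(s) = Σ_{i₁,...,i_s = 1}^{ℓ-1} [ζ^{i₁}|ζ|...|ζ^{i_s}|ζ]`. -/
noncomputable def zetaChain (ℓ : ℕ) (ζ : G) (s : ℕ) : BarChain G k :=
  ∑ f : Fin s → Fin (ℓ - 1),
    barSym ((List.ofFn (fun j => [ζ ^ ((f j : ℕ) + 1), ζ])).flatten)

/-- The iterated shuffle product `⟨x₁,...,x_i⟩ = [x₁] ∧ ... ∧ [x_i]`. -/
noncomputable def wedgeList (l : List G) : BarChain G k :=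
  l.foldr (fun g acc => barNSh (barSym [g]) acc) (barSym [])

/-!
Everything is computed with three operators on chains: `barCons g` (prepend `g`), `barD`, and
`shuffleBy l = [l] ∧ -`, so that `⟨x :: l⟩ = [x] ∧ ⟨l⟩`. Both `barCons` and `shuffleBy` ignore
words containing `1` and normalize their output, so the recursions

* `[y|a] ∧ [z|u] = [y | a ∧ [z|u]] + (-1)^(|a|+1) [z | [y|a] ∧ u]`,
* `d[g|h|u] = [h|u] - [gh|u] + [g|u] - [g | d[h|u]]`

hold for all chains `u`, and normalized words are generated from `[]` by `barCons`.

Induction on words then gives, for `u` whose letters commute with `x`, resp. with `y` and `y'`,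
`d([x] ∧ u) = -[x] ∧ du` and `d([y|y'] ∧ u) = [y] ∧ u + [y'] ∧ u - [yy'] ∧ u + [y|y'] ∧ du`.
The first makes `⟨l⟩` a cycle and lets `[x] ∧ -` carry boundaries to boundaries; the second,
applied to the cycle `⟨l₂⟩`, exhibits `[yy'] ∧ ⟨l₂⟩ - [y] ∧ ⟨l₂⟩ - [y'] ∧ ⟨l₂⟩` as the boundary
of `-[y|y'] ∧ ⟨l₂⟩`. Skew-symmetry holds on the nose: `[y] ∧ [y'] ∧ u = -[y'] ∧ [y] ∧ u`.
-/

theorem barSym_of_one_mem {l : List G} (h : (1 : G) ∈ l) : (barSym l : BarChain G k) = 0 := by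
  simp [barSym, h]

theorem barSym_of_one_notMem {l : List G} (h : (1 : G) ∉ l) :
    (barSym l : BarChain G k) = single l 1 := by
  simp [barSym, h]

@[simp] theorem barNorm_single (l : List G) (c : k) : barNorm (single l c) = c • barSym l := by
  simp [barNorm]

@[simp] theorem barD_single (l : List G) (c : k) : barD (single l c) = c • barDList l := by
  simp [barD]

@[simp] theorem barSh_single_single (l₁ l₂ : List G) (c d : k) :
    barSh (single l₁ c) (single l₂ d) = (c * d) • shuffleList l₁ l₂ := by
  simp [barSh, smul_smul]

theorem shuffleList_nil_right (l : List G) : (shuffleList l [] : BarChain G k) = single l 1 := by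
  cases l <;> simp [shuffleList]

theorem barNorm_barSym (l : List G) : barNorm (barSym l : BarChain G k) = barSym l := by
  by_cases h : (1 : G) ∈ l
  · simp [barSym_of_one_mem h]
  · simp [barSym_of_one_notMem h]

theorem barD_barSym (l : List G) (h : (1 : G) ∉ l) :
    barD (barSym l : BarChain G k) = barDList l := by
  simp [barSym_of_one_notMem h]

theorem barD_barSym_nil : barD (barSym [] : BarChain G k) = 0 := by
  simp [barD_barSym, barDList]

theorem barD_barSym_singleton (g : G) : barD (barSym [g] : BarChain G k) = 0 := by
  by_cases h : g = 1
  · simp [barSym_of_one_mem, h]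
  · simp [barD_barSym, barDList, Ne.symm h]

noncomputable def barCons (g : G) : BarChain G k →ₗ[k] BarChain G k :=
  Finsupp.lsum k fun n => LinearMap.toSpanSingleton k _ (barSym (g :: n))

@[simp] theorem barCons_single (g : G) (n : List G) (c : k) :
    barCons g (single n c) = c • (barSym (g :: n) : BarChain G k) := by
  simp [barCons]

theorem barCons_barSym (g : G) (n : List G) :
    barCons g (barSym n : BarChain G k) = barSym (g :: n) := by
  by_cases h : (1 : G) ∈ n
  · simp [barSym_of_one_mem h, barSym_of_one_mem (List.mem_cons_of_mem g h)]
  · simp [barSym_of_one_notMem h]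

theorem barCons_one : (barCons 1 : BarChain G k →ₗ[k] BarChain G k) = 0 := by
  ext n
  simp [barSym_of_one_mem]

theorem barNorm_barCons (g : G) (u : BarChain G k) : barNorm (barCons g u) = barCons g u := by
  induction u using Finsupp.induction_linear with
  | zero => simp
  | add u v hu hv => simp only [map_add, hu, hv]
  | single n c => simp [barNorm_barSym]

theorem barNorm_mapDomain_cons (g : G) (u : BarChain G k) :
    barNorm (mapDomain (g :: ·) u) = barCons g (barNorm u) := by
  induction u using Finsupp.induction_linear with
  | zero => simp
  | add u v hu hv => simp only [mapDomain_add, map_add, hu, hv]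
  | single n c => simp [barCons_barSym]

theorem barNorm_shuffleList_cons_cons (x y : G) (xs ys : List G) :
    barNorm (shuffleList (x :: xs) (y :: ys) : BarChain G k) =
      barCons x (barNorm (shuffleList xs (y :: ys)))
        + (-1 : k) ^ (xs.length + 1) • barCons y (barNorm (shuffleList (x :: xs) ys)) := by
  rw [shuffleList, map_add, map_smul, barNorm_mapDomain_cons, barNorm_mapDomain_cons]

theorem barNorm_shuffleList_of_one_mem {l₁ l₂ : List G} (h : (1 : G) ∈ l₁ ++ l₂) :
    barNorm (shuffleList l₁ l₂ : BarChain G k) = 0 := by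
  induction l₁, l₂ using shuffleList.induct with
  | case1 l => simp_all [shuffleList, barSym_of_one_mem]
  | case2 l _ => simp_all [shuffleList_nil_right, barSym_of_one_mem]
  | case3 x xs y ys ih₁ ih₂ =>
    have h₁ : barCons x (barNorm (shuffleList xs (y :: ys))) = (0 : BarChain G k) := by
      by_cases hx : x = 1
      · simp [hx, barCons_one]
      · rw [ih₁ (by simpa [Ne.symm hx] using h), map_zero]
    have h₂ : barCons y (barNorm (shuffleList (x :: xs) ys)) = (0 : BarChain G k) := by
      by_cases hy : y = 1
      · simp [hy, barCons_one]
      · rw [ih₂ (by simpa [Ne.symm hy] using h), map_zero]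
    rw [barNorm_shuffleList_cons_cons, h₁, h₂, smul_zero, add_zero]

noncomputable def shuffleBy (l : List G) : BarChain G k →ₗ[k] BarChain G k :=
  barNorm ∘ₗ barSh (barSym l)

theorem shuffleBy_single (l n : List G) :
    shuffleBy l (single n 1 : BarChain G k) = barNorm (shuffleList l n) := by
  by_cases h : (1 : G) ∈ l
  · simp [shuffleBy, barSym_of_one_mem h,
      barNorm_shuffleList_of_one_mem (List.mem_append_left n h)]
  · simp [shuffleBy, barSym_of_one_notMem h]

theorem shuffleBy_barSym (l n : List G) :
    shuffleBy l (barSym n : BarChain G k) = barNorm (shuffleList l n) := by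
  by_cases h : (1 : G) ∈ n
  · simp [barSym_of_one_mem h, barNorm_shuffleList_of_one_mem (List.mem_append_right l h)]
  · rw [barSym_of_one_notMem h, shuffleBy_single]

theorem shuffleBy_nil_left (u : BarChain G k) : shuffleBy [] u = barNorm u := by
  induction u using Finsupp.induction_linear with
  | zero => simp
  | add u v hu hv => simp only [map_add, hu, hv]
  | single n c => rw [← smul_single_one, map_smul, shuffleBy_single, shuffleList, map_smul]

theorem shuffleBy_barSym_nil (l : List G) :
    shuffleBy l (barSym [] : BarChain G k) = barSym l := by
  rw [shuffleBy_barSym, shuffleList_nil_right, barNorm_single, one_smul]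

theorem shuffleBy_cons_barCons (y z : G) (a : List G) (u : BarChain G k) :
    shuffleBy (y :: a) (barCons z u) = barCons y (shuffleBy a (barCons z u))
      + (-1 : k) ^ (a.length + 1) • barCons z (shuffleBy (y :: a) u) := by
  induction u using Finsupp.induction_linear with
  | zero => simp
  | add u v hu hv => simp only [map_add, hu, hv, smul_add]; abel
  | single n c =>
    rw [← smul_single_one]
    simp only [map_smul, barCons_single, one_smul, shuffleBy_barSym, shuffleBy_single,
      barNorm_shuffleList_cons_cons, smul_add]
    module

theorem shuffleBy_singleton_barCons (g z : G) (u : BarChain G k) :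
    shuffleBy [g] (barCons z u) = barCons g (barCons z u) - barCons z (shuffleBy [g] u) := by
  rw [shuffleBy_cons_barCons, shuffleBy_nil_left, barNorm_barCons]
  simp [sub_eq_add_neg]

theorem shuffleBy_pair_barCons (y y' z : G) (u : BarChain G k) :
    shuffleBy [y, y'] (barCons z u)
      = barCons y (shuffleBy [y'] (barCons z u)) + barCons z (shuffleBy [y, y'] u) := by
  rw [shuffleBy_cons_barCons]
  simp

theorem mergeAt_cons_cons_zero (g h : G) (t : List G) : mergeAt (g :: h :: t) 0 = g * h :: t := by
  simp [mergeAt]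

theorem mergeAt_cons_succ (g : G) (n : List G) (j : ℕ) :
    mergeAt (g :: n) (j + 1) = g :: mergeAt n j := by
  simp [mergeAt]

-- Besides the first two faces of `[g|h|n]`, every face is `g` prepended to a face of `[h|n]`
-- other than its first one.
theorem barDList_cons_cons (g h : G) (n : List G) :
    (barDList (g :: h :: n) : BarChain G k) = barSym (h :: n) - barSym (g * h :: n)
      + barSym (g :: n) - barCons g (barDList (h :: n)) := by
  simp only [barDList, reduceCtorEq, if_false, List.tail_cons, List.length_cons,
    Nat.add_sub_cancel, Finset.sum_range_succ', mergeAt_cons_cons_zero, mergeAt_cons_succ,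
    map_add, map_sum, map_smul, barCons_barSym, List.dropLast_cons_cons]
  simp only [pow_succ, pow_zero, mul_neg, mul_one, neg_smul, neg_neg, one_smul,
    Finset.sum_neg_distrib]
  abel

theorem barD_barSym_cons_cons (g h : G) (n : List G) :
    barD (barSym (g :: h :: n) : BarChain G k) = barSym (h :: n) - barSym (g * h :: n)
      + barSym (g :: n) - barCons g (barD (barSym (h :: n))) := by
  by_cases hg : g = 1
  · simp [hg, barSym_of_one_mem, barCons_one]
  by_cases hh : h = 1
  · simp [hh, barSym_of_one_mem]
  by_cases hn : (1 : G) ∈ n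
  · simp [barSym_of_one_mem, hn]
  have hhn : (1 : G) ∉ h :: n := by simp [Ne.symm hh, hn]
  rw [barD_barSym _ (by simp [Ne.symm hg, hhn]), barD_barSym _ hhn, barDList_cons_cons]

theorem barD_barCons_barCons (g h : G) (u : BarChain G k) :
    barD (barCons g (barCons h u)) = barCons h u - barCons (g * h) u + barCons g u
      - barCons g (barD (barCons h u)) := by
  induction u using Finsupp.induction_linear with
  | zero => simp
  | add u v hu hv => simp only [map_add, hu, hv]; abel
  | single n c =>
    simp only [barCons_single, map_smul, barCons_barSym, barD_barSym_cons_cons]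
    module

theorem barSym_cons (g : G) (n : List G) :
    (barSym (g :: n) : BarChain G k) = barCons g (barSym n) :=
  (barCons_barSym g n).symm

theorem barD_barCons_barSym_nil (g : G) : barD (barCons g (barSym []) : BarChain G k) = 0 := by
  rw [barCons_barSym, barD_barSym_singleton]

theorem barD_shuffleBy_singleton_barSym_singleton {x z : G} (hzx : Commute z x) :
    barD (shuffleBy [x] (barSym [z]) : BarChain G k) = 0 := by
  simp only [barSym_cons, shuffleBy_singleton_barCons, shuffleBy_barSym_nil, map_sub,
    barD_barCons_barCons, barD_barCons_barSym_nil, map_zero, hzx.eq]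
  abel

-- The faces of `[x|z|…]` and `[z|x|…]` that merge `x` with `z` cancel since `z * x = x * z`.
theorem barD_shuffleBy_singleton_barCons_barCons {x z w : G} (hzx : Commute z x)
    (v : BarChain G k)
    (ih : barD (shuffleBy [x] (barCons w v)) = -shuffleBy [x] (barD (barCons w v))) :
    barD (shuffleBy [x] (barCons z (barCons w v)))
      = -shuffleBy [x] (barD (barCons z (barCons w v))) := by
  have ih' := congrArg (barCons z) ih
  simp only [shuffleBy_singleton_barCons, barD_barCons_barCons, map_add, map_sub, map_neg,
    hzx.eq] at ih' ⊢
  linear_combination (norm := abel) ih'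

theorem barD_shuffleBy_singleton_barSym {x : G} {m : List G} (hm : ∀ z ∈ m, Commute z x) :
    barD (shuffleBy [x] (barSym m) : BarChain G k) = -shuffleBy [x] (barD (barSym m)) := by
  induction m with
  | nil => rw [shuffleBy_barSym_nil, barD_barSym_singleton, barD_barSym_nil, map_zero, neg_zero]
  | cons z m ih =>
    cases m with
    | nil =>
      rw [barD_shuffleBy_singleton_barSym_singleton (hm z (by simp)), barD_barSym_singleton,
        map_zero, neg_zero]
    | cons w ws =>
      simp only [barSym_cons] at ih ⊢
      exact barD_shuffleBy_singleton_barCons_barCons (hm z (by simp)) _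
        (ih fun a ha => hm a (List.mem_cons_of_mem z ha))

theorem barD_shuffleBy_pair_barSym_nil (y y' : G) :
    barD (shuffleBy [y, y'] (barSym []) : BarChain G k) = shuffleBy [y] (barSym [])
      + shuffleBy [y'] (barSym []) - shuffleBy [y * y'] (barSym [])
      + shuffleBy [y, y'] (barD (barSym [])) := by
  simp only [shuffleBy_barSym_nil, barD_barSym_nil, map_zero, barSym_cons, barD_barCons_barCons,
    barD_barCons_barSym_nil]
  abel

theorem barD_shuffleBy_pair_barSym_singleton {y y' z : G} (hzy : Commute z y)
    (hzy' : Commute z y') :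
    barD (shuffleBy [y, y'] (barSym [z]) : BarChain G k) = shuffleBy [y] (barSym [z])
      + shuffleBy [y'] (barSym [z]) - shuffleBy [y * y'] (barSym [z])
      + shuffleBy [y, y'] (barD (barSym [z])) := by
  simp only [barSym_cons, shuffleBy_pair_barCons, shuffleBy_singleton_barCons,
    barD_barCons_barCons, shuffleBy_barSym_nil, barD_barCons_barSym_nil, map_add, map_sub,
    map_zero, hzy.eq, hzy'.eq]
  abel

theorem barD_shuffleBy_pair_barCons_barCons {y y' z w : G} (hzy : Commute z y)
    (hzy' : Commute z y') (v : BarChain G k)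
    (hJ : barD (shuffleBy [y'] (barCons z (barCons w v)))
      = -shuffleBy [y'] (barD (barCons z (barCons w v))))
    (ih : barD (shuffleBy [y, y'] (barCons w v)) = shuffleBy [y] (barCons w v)
      + shuffleBy [y'] (barCons w v) - shuffleBy [y * y'] (barCons w v)
      + shuffleBy [y, y'] (barD (barCons w v))) :
    barD (shuffleBy [y, y'] (barCons z (barCons w v))) = shuffleBy [y] (barCons z (barCons w v))
      + shuffleBy [y'] (barCons z (barCons w v)) - shuffleBy [y * y'] (barCons z (barCons w v))
      + shuffleBy [y, y'] (barD (barCons z (barCons w v))) := by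
  have ih' := congrArg (barCons z) ih
  have hJ' := congrArg (barCons y) hJ
  simp only [shuffleBy_pair_barCons, shuffleBy_singleton_barCons, barD_barCons_barCons, map_add,
    map_sub, map_neg, hzy.eq, hzy'.eq] at ih' hJ' ⊢
  linear_combination (norm := abel) -ih' - hJ'

theorem barD_shuffleBy_pair_barSym {y y' : G} {m : List G}
    (hm : ∀ z ∈ m, Commute z y ∧ Commute z y') :
    barD (shuffleBy [y, y'] (barSym m) : BarChain G k) = shuffleBy [y] (barSym m)
      + shuffleBy [y'] (barSym m) - shuffleBy [y * y'] (barSym m)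
      + shuffleBy [y, y'] (barD (barSym m)) := by
  induction m with
  | nil => exact barD_shuffleBy_pair_barSym_nil y y'
  | cons z m ih =>
    have hz := hm z List.mem_cons_self
    cases m with
    | nil => exact barD_shuffleBy_pair_barSym_singleton hz.1 hz.2
    | cons w ws =>
      have hJ := barD_shuffleBy_singleton_barSym (k := k) (x := y') (m := z :: w :: ws)
        fun a ha => (hm a ha).2
      simp only [barSym_cons] at ih hJ ⊢
      exact barD_shuffleBy_pair_barCons_barCons hz.1 hz.2 _ hJ
        (ih fun a ha => hm a (List.mem_cons_of_mem z ha))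

theorem shuffleBy_singleton_anticomm_barSym (y y' : G) (m : List G) :
    shuffleBy [y] (shuffleBy [y'] (barSym m)) + shuffleBy [y'] (shuffleBy [y] (barSym m))
      = (0 : BarChain G k) := by
  induction m with
  | nil =>
    simp only [shuffleBy_barSym_nil, barSym_cons, shuffleBy_singleton_barCons]
    abel
  | cons z m ih =>
    have ih' := congrArg (barCons z) ih
    simp only [barSym_cons, shuffleBy_singleton_barCons, map_add, map_sub, map_zero] at ih' ⊢
    linear_combination (norm := abel) ih'

theorem shuffleBy_singleton_anticomm (y y' : G) (u : BarChain G k) :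
    shuffleBy [y] (shuffleBy [y'] u) + shuffleBy [y'] (shuffleBy [y] u) = 0 := by
  induction u using Finsupp.induction_linear with
  | zero => simp
  | add u v hu hv => simp only [map_add]; linear_combination (norm := abel) hu + hv
  | single n c =>
    rw [← smul_single_one, map_smul, map_smul, map_smul, map_smul, ← smul_add,
      shuffleBy_single [y'], shuffleBy_single [y], ← shuffleBy_barSym, ← shuffleBy_barSym,
      shuffleBy_singleton_anticomm_barSym, smul_zero]

noncomputable def letterSpan (E : Set G) : Submodule k (BarChain G k) :=
  Submodule.span k (barSym '' {m | ∀ z ∈ m, z ∈ E})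

theorem barSym_mem_letterSpan {E : Set G} {m : List G} (hm : ∀ z ∈ m, z ∈ E) :
    (barSym m : BarChain G k) ∈ letterSpan E :=
  Submodule.subset_span ⟨m, hm, rfl⟩

theorem letterSpan_mono {E F : Set G} (h : E ⊆ F) :
    (letterSpan E : Submodule k (BarChain G k)) ≤ letterSpan F :=
  Submodule.span_mono (Set.image_mono fun _ hm z hz => h (hm z hz))

theorem barCons_mem_letterSpan {E : Set G} {x : G} (hx : x ∈ E) {u : BarChain G k}
    (hu : u ∈ letterSpan E) : barCons x u ∈ letterSpan E := by
  refine (Submodule.span_le (p := (letterSpan E).comap (barCons x))).2 ?_ hu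
  rintro _ ⟨m, hm, rfl⟩
  rw [SetLike.mem_coe, Submodule.mem_comap, barCons_barSym]
  exact barSym_mem_letterSpan (by simpa [hx] using hm)

theorem barNorm_shuffleList_mem_letterSpan {E : Set G} {l₁ l₂ : List G} (h₁ : ∀ z ∈ l₁, z ∈ E)
    (h₂ : ∀ z ∈ l₂, z ∈ E) : barNorm (shuffleList l₁ l₂ : BarChain G k) ∈ letterSpan E := by
  induction l₁, l₂ using shuffleList.induct with
  | case1 l => simpa [shuffleList] using barSym_mem_letterSpan h₂
  | case2 l _ => simpa [shuffleList_nil_right] using barSym_mem_letterSpan h₁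
  | case3 x xs y ys ih₁ ih₂ =>
    rw [barNorm_shuffleList_cons_cons]
    refine Submodule.add_mem _ (barCons_mem_letterSpan (h₁ x (by simp)) (ih₁ ?_ h₂))
      (Submodule.smul_mem _ _ (barCons_mem_letterSpan (h₂ y (by simp)) (ih₂ h₁ ?_)))
    · exact fun z hz => h₁ z (List.mem_cons_of_mem x hz)
    · exact fun z hz => h₂ z (List.mem_cons_of_mem y hz)

theorem shuffleBy_mem_letterSpan {E : Set G} {l : List G} (hl : ∀ z ∈ l, z ∈ E)
    {u : BarChain G k} (hu : u ∈ letterSpan E) : shuffleBy l u ∈ letterSpan E := by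
  refine (Submodule.span_le (p := (letterSpan E).comap (shuffleBy l))).2 ?_ hu
  rintro _ ⟨m, hm, rfl⟩
  rw [SetLike.mem_coe, Submodule.mem_comap, shuffleBy_barSym]
  exact barNorm_shuffleList_mem_letterSpan hl hm

theorem barD_shuffleBy_singleton {x : G} {u : BarChain G k}
    (hu : u ∈ letterSpan {z | Commute z x}) :
    barD (shuffleBy [x] u) = -shuffleBy [x] (barD u) := by
  induction hu using Submodule.span_induction with
  | mem _ hm =>
    obtain ⟨m, hm, rfl⟩ := hm
    exact barD_shuffleBy_singleton_barSym hm
  | zero => simp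
  | add u v _ _ hu hv => simp only [map_add, hu, hv, neg_add]
  | smul c u _ hu => simp only [map_smul, hu, smul_neg]

theorem barD_shuffleBy_pair {y y' : G} {u : BarChain G k}
    (hu : u ∈ letterSpan {z | Commute z y ∧ Commute z y'}) :
    barD (shuffleBy [y, y'] u) = shuffleBy [y] u + shuffleBy [y'] u - shuffleBy [y * y'] u
      + shuffleBy [y, y'] (barD u) := by
  induction hu using Submodule.span_induction with
  | mem _ hm =>
    obtain ⟨m, hm, rfl⟩ := hm
    exact barD_shuffleBy_pair_barSym hm
  | zero => simp
  | add u v _ _ hu hv => simp only [map_add, hu, hv]; abel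
  | smul c u _ hu => simp only [map_smul, hu, smul_add, smul_sub]

theorem wedgeList_cons (x : G) (l : List G) :
    (wedgeList (x :: l) : BarChain G k) = shuffleBy [x] (wedgeList l) := rfl

theorem wedgeList_mem_letterSpan {E : Set G} {l : List G} (hl : ∀ z ∈ l, z ∈ E) :
    (wedgeList l : BarChain G k) ∈ letterSpan E := by
  induction l with
  | nil => exact barSym_mem_letterSpan (m := []) (by simp)
  | cons x l ih =>
    rw [wedgeList_cons]
    exact shuffleBy_mem_letterSpan (by simpa using hl x (by simp))
      (ih fun z hz => hl z (List.mem_cons_of_mem x hz))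

theorem barD_wedgeList {l : List G} (hl : ∀ a ∈ l, ∀ b ∈ l, Commute a b) :
    barD (wedgeList l : BarChain G k) = 0 := by
  induction l with
  | nil => exact barD_barSym_nil
  | cons x l ih =>
    rw [wedgeList_cons, barD_shuffleBy_singleton, ih, map_zero, neg_zero]
    · exact fun a ha b hb => hl a (by simp [ha]) b (by simp [hb])
    · exact wedgeList_mem_letterSpan fun z hz => hl z (by simp [hz]) x (by simp)

theorem exists_barD_eq_wedgeList_mul_sub {E : Set G} (hE : ∀ a ∈ E, ∀ b ∈ E, Commute a b)
    {l₁ l₂ : List G} {y y' : G} (hl : ∀ z ∈ l₁ ++ [y, y'] ++ l₂, z ∈ E) :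
    ∃ c ∈ letterSpan E, (wedgeList (l₁ ++ [y * y'] ++ l₂) : BarChain G k)
      - (wedgeList (l₁ ++ [y] ++ l₂) + wedgeList (l₁ ++ [y'] ++ l₂)) = barD c := by
  induction l₁ with
  | nil =>
    have hy : y ∈ E := hl y (by simp)
    have hy' : y' ∈ E := hl y' (by simp)
    have hw : (wedgeList l₂ : BarChain G k) ∈ letterSpan E :=
      wedgeList_mem_letterSpan fun z hz => hl z (by simp [hz])
    refine ⟨-shuffleBy [y, y'] (wedgeList l₂),
      Submodule.neg_mem _ (shuffleBy_mem_letterSpan (by simp [hy, hy']) hw), ?_⟩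
    have hw' : (wedgeList l₂ : BarChain G k) ∈ letterSpan {z | Commute z y ∧ Commute z y'} :=
      letterSpan_mono (fun z hz => show Commute z y ∧ Commute z y' from
        ⟨hE z hz y hy, hE z hz y' hy'⟩) hw
    rw [map_neg, barD_shuffleBy_pair hw',
      barD_wedgeList fun a ha b hb => hE a (hl a (by simp [ha])) b (hl b (by simp [hb])),
      map_zero, add_zero]
    simp only [List.nil_append, List.cons_append, wedgeList_cons]
    abel
  | cons x l₁ ih =>
    have hx : x ∈ E := hl x (by simp)
    obtain ⟨c, hc, hdc⟩ := ih fun z hz => hl z (List.mem_cons_of_mem x hz)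
    refine ⟨-shuffleBy [x] c,
      Submodule.neg_mem _ (shuffleBy_mem_letterSpan (by simp [hx]) hc), ?_⟩
    rw [map_neg, barD_shuffleBy_singleton (letterSpan_mono (fun z hz => hE z hz x hx) hc),
      neg_neg, ← hdc]
    simp only [List.cons_append, wedgeList_cons, map_add, map_sub]

theorem wedgeList_append_pair_add_swap (l₁ l₂ : List G) (y y' : G) :
    (wedgeList (l₁ ++ [y, y'] ++ l₂) : BarChain G k) + wedgeList (l₁ ++ [y', y] ++ l₂) = 0 := by
  induction l₁ with
  | nil => exact shuffleBy_singleton_anticomm y y' _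
  | cons x l₁ ih => simp only [List.cons_append, wedgeList_cons, ← map_add, ih, map_zero]

/-- for pairwise commuting `x₁,...,x_i`, the chain
`⟨x₁,...,x_i⟩ = [x₁] ∧ ... ∧ [x_i]` is a cycle, and the homology class it
represents is multilinear and skew-symmetric in the entries (equalities in
homology are expressed as "the difference is a boundary"). -/
theorem stmt3 {G : Type*} [Group G] {k : Type*} [CommRing k] :
    (∀ l : List G, (∀ a ∈ l, ∀ b ∈ l, a * b = b * a) →
      barD (wedgeList l : BarChain G k) = 0) ∧
    (∀ (l1 l2 : List G) (y y' : G),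
      (∀ a ∈ l1 ++ [y, y'] ++ l2, ∀ b ∈ l1 ++ [y, y'] ++ l2, a * b = b * a) →
      ∃ c : BarChain G k,
        wedgeList (l1 ++ [y * y'] ++ l2)
          - (wedgeList (l1 ++ [y] ++ l2) + wedgeList (l1 ++ [y'] ++ l2)) = barD c) ∧
    (∀ (l1 l2 : List G) (y y' : G),
      (∀ a ∈ l1 ++ [y, y'] ++ l2, ∀ b ∈ l1 ++ [y, y'] ++ l2, a * b = b * a) →
      ∃ c : BarChain G k,
        wedgeList (l1 ++ [y, y'] ++ l2) + wedgeList (l1 ++ [y', y] ++ l2) = barD c) := by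
  refine ⟨fun l hl => barD_wedgeList hl, fun l₁ l₂ y y' hl => ?_, fun l₁ l₂ y y' _ => ?_⟩
  · obtain ⟨c, -, hc⟩ := exists_barD_eq_wedgeList_mul_sub (k := k) hl fun z hz => hz
    exact ⟨c, hc⟩
  · exact ⟨0, by rw [map_zero, wedgeList_append_pair_add_swap]⟩
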